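/- arXiv:1510.06443 — 2 statements merged into one kernel-verified Lean document; each statement's English description precedes it below -/
import Mathlib

section
/- Let k be a field, A a finite-dimensional k-algebra, and M, X finite-dimensional right A-modules. If there exists an add M-approximating sequence for X, then there exists a minimal add M-approximating sequence 0 → M1' → M0' → X → 0 for X, and it is a direct summand of any add M-approximating sequence: for every add M-approximating sequence 0 → M1 → M0 → X → 0 there exist section morphisms (split monomorphisms) u : M1' → M1 and v : M0' → M0 forming, together with the identity of X, a morphism of short exact sequences. -/
/-!
Statement 3.  Let `k` be a field, `A` a finite-dimensional `k`-algebra, and `M, X`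
finite-dimensional right `A`-modules.  If there exists an `add M`-approximating sequence
for `X`, then there exists a minimal `add M`-approximating sequence
`0 → M₁' → M₀' → X → 0` for `X`, and it is a direct summand of any `add M`-approximating
sequence: for every `add M`-approximating sequence `0 → M₁ → M₀ → X → 0` there exist
split monomorphisms `u : M₁' → M₁` and `v : M₀' → M₀` forming, together with the identity
of `X`, a morphism of short exact sequences.

Right `A`-modules are formalized as modules over `Aᵐᵒᵖ`.
-/

/-- `X` belongs to `add M`: it is (isomorphic to) a direct summand of a finite direct sum
of copies of `M`. -/
def InAdd (R : Type) [Ring R] (M X : Type) [AddCommGroup M] [Module R M]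
    [AddCommGroup X] [Module R X] : Prop :=
  ∃ (n : ℕ) (i : X →ₗ[R] (Fin n → M)) (p : (Fin n → M) →ₗ[R] X),
    p ∘ₗ i = LinearMap.id

/-- `f₀ : M₀ → X` is an `add M`-approximation of `X`: every morphism `f : M' → X` with
`M'` in `add M` factors through `f₀`. -/
def IsAddApprox (R : Type) [Ring R] (M : Type) [AddCommGroup M] [Module R M]
    {M₀ X : Type} [AddCommGroup M₀] [Module R M₀] [AddCommGroup X] [Module R X]
    (f₀ : M₀ →ₗ[R] X) : Prop :=
  ∀ (M' : Type) [AddCommGroup M'] [Module R M'], InAdd R M M' →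
    ∀ f : M' →ₗ[R] X, ∃ g : M' →ₗ[R] M₀, f₀ ∘ₗ g = f

/-- `f₀ : M₀ → X` is right minimal: every endomorphism `g` of `M₀` with `f₀ ∘ g = f₀`
is an automorphism. -/
def RightMinimal (R : Type) [Ring R] {M₀ X : Type} [AddCommGroup M₀] [Module R M₀]
    [AddCommGroup X] [Module R X] (f₀ : M₀ →ₗ[R] X) : Prop :=
  ∀ g : M₀ →ₗ[R] M₀, f₀ ∘ₗ g = f₀ → Function.Bijective g

/-- An `add M`-approximating sequence `0 → M₁ → M₀ → X → 0` for `X`: a short exact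
sequence with `M₁, M₀` in `add M` whose epimorphism `M₀ → X` is an
`add M`-approximation. -/
structure ApproxSeq (R : Type) [Ring R] (M X : Type) [AddCommGroup M] [Module R M]
    [AddCommGroup X] [Module R X] where
  M₁ : Type
  M₀ : Type
  [acg₁ : AddCommGroup M₁]
  [acg₀ : AddCommGroup M₀]
  [mod₁ : Module R M₁]
  [mod₀ : Module R M₀]
  ι : M₁ →ₗ[R] M₀
  π : M₀ →ₗ[R] X
  mono : Function.Injective ι
  exact : LinearMap.range ι = LinearMap.ker π
  epi : Function.Surjective π
  mem₁ : InAdd R M M₁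
  mem₀ : InAdd R M M₀
  approx : IsAddApprox R M π

attribute [instance] ApproxSeq.acg₁ ApproxSeq.acg₀ ApproxSeq.mod₁ ApproxSeq.mod₀

/-!
Choose an approximating sequence whose middle term `M₀` has minimal length. If `π ∘ g = π`,
Fitting's lemma gives `M₀ = ker gⁿ ⊕ range gⁿ` with `ker gⁿ ⊆ ker π`, and restricting the
sequence to `range gⁿ` gives another approximating sequence; by minimality `range gⁿ = M₀`,
so `g` is an automorphism. For any other sequence `T`, the approximation properties give maps
`v : M₀ → T₀` and `w : T₀ → M₀` over `X`; right minimality makes `w ∘ v` an automorphism, so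
`v` is a split monomorphism, and so is the map it induces on kernels.
-/

section InAdd

variable {R M N N' : Type} [Ring R] [AddCommGroup M] [Module R M]
  [AddCommGroup N] [Module R N] [AddCommGroup N'] [Module R N']

theorem InAdd.of_retract (i : N →ₗ[R] N') (p : N' →ₗ[R] N) (hpi : p ∘ₗ i = LinearMap.id)
    (h : InAdd R M N') : InAdd R M N := by
  obtain ⟨n, i', p', hp'i'⟩ := h
  refine ⟨n, i' ∘ₗ i, p ∘ₗ p', ?_⟩
  rw [LinearMap.comp_assoc, ← LinearMap.comp_assoc i, hp'i', LinearMap.id_comp, hpi]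

theorem InAdd.of_linearEquiv (e : N ≃ₗ[R] N') (h : InAdd R M N') : InAdd R M N :=
  h.of_retract e.toLinearMap e.symm.toLinearMap (by ext; simp)

theorem InAdd.isNoetherian [IsNoetherian R M] (h : InAdd R M N) : IsNoetherian R N := by
  obtain ⟨n, i, p, hpi⟩ := h
  exact isNoetherian_of_surjective p <| LinearMap.range_eq_top.2 fun x ↦ ⟨i x, congr($hpi x)⟩

theorem InAdd.isArtinian [IsArtinian R M] (h : InAdd R M N) : IsArtinian R N := by
  obtain ⟨n, i, p, hpi⟩ := h
  exact isArtinian_of_surjective _ p fun x ↦ ⟨i x, congr($hpi x)⟩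

end InAdd

theorem LinearMap.comp_pow_eq_self {R N X : Type*} [Semiring R] [AddCommMonoid N] [Module R N]
    [AddCommMonoid X] [Module R X] {π : N →ₗ[R] X} {g : Module.End R N} (hg : π ∘ₗ g = π) :
    ∀ n : ℕ, π ∘ₗ g ^ n = π
  | 0 => rfl
  | n + 1 => by
    rw [pow_succ, Module.End.mul_eq_comp, ← LinearMap.comp_assoc, comp_pow_eq_self hg n, hg]

theorem RightMinimal.exists_retraction {R M₀ N X : Type} [Ring R]
    [AddCommGroup M₀] [Module R M₀] [AddCommGroup N] [Module R N] [AddCommGroup X] [Module R X]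
    {π : M₀ →ₗ[R] X} (hπ : RightMinimal R π) {π' : N →ₗ[R] X}
    (v : M₀ →ₗ[R] N) (w : N →ₗ[R] M₀) (hv : π' ∘ₗ v = π) (hw : π ∘ₗ w = π') :
    ∃ v' : N →ₗ[R] M₀, v' ∘ₗ v = LinearMap.id ∧ π ∘ₗ v' = π' := by
  have hwv : π ∘ₗ (w ∘ₗ v) = π := by rw [← LinearMap.comp_assoc, hw, hv]
  let e := LinearEquiv.ofBijective (w ∘ₗ v) (hπ _ hwv)
  refine ⟨e.symm.toLinearMap ∘ₗ w, ?_, ?_⟩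
  · ext x
    exact e.symm_apply_apply x
  · ext y
    calc π (e.symm (w y)) = π (e (e.symm (w y))) := congr($hwv (e.symm (w y))).symm
      _ = π' y := by rw [e.apply_symm_apply, ← hw, LinearMap.comp_apply]

namespace ApproxSeq

variable {R M X : Type} [Ring R] [AddCommGroup M] [Module R M] [AddCommGroup X] [Module R X]

noncomputable def kerEquiv (S : ApproxSeq R M X) : S.M₁ ≃ₗ[R] LinearMap.ker S.π :=
  (LinearEquiv.ofInjective S.ι S.mono).trans (LinearEquiv.ofEq _ _ S.exact)

@[simp]
theorem coe_kerEquiv_apply (S : ApproxSeq R M X) (y : S.M₁) :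
    (S.kerEquiv y : S.M₀) = S.ι y :=
  rfl

@[simp]
theorem ι_kerEquiv_symm_apply (S : ApproxSeq R M X) (z : LinearMap.ker S.π) :
    S.ι (S.kerEquiv.symm z) = z := by
  rw [← coe_kerEquiv_apply, LinearEquiv.apply_symm_apply]

theorem inAdd_ker (S : ApproxSeq R M X) : InAdd R M (LinearMap.ker S.π) :=
  S.mem₁.of_linearEquiv S.kerEquiv.symm

noncomputable def mapKer (S T : ApproxSeq R M X) (v : S.M₀ →ₗ[R] T.M₀) (hv : T.π ∘ₗ v = S.π) :
    S.M₁ →ₗ[R] T.M₁ :=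
  T.kerEquiv.symm.toLinearMap ∘ₗ (v ∘ₗ S.ι).codRestrict (LinearMap.ker T.π) fun y ↦ by
    have : S.ι y ∈ LinearMap.ker S.π := S.exact ▸ LinearMap.mem_range_self S.ι y
    simpa [← hv] using this

@[simp]
theorem ι_mapKer_apply (S T : ApproxSeq R M X) (v : S.M₀ →ₗ[R] T.M₀) (hv : T.π ∘ₗ v = S.π)
    (y : S.M₁) : T.ι (S.mapKer T v hv y) = v (S.ι y) := by
  simp [mapKer]

def ofApprox {N : Type} [AddCommGroup N] [Module R N] (π : N →ₗ[R] X)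
    (hπ : Function.Surjective π) (hN : InAdd R M N) (hker : InAdd R M (LinearMap.ker π))
    (happrox : IsAddApprox R M π) : ApproxSeq R M X where
  M₁ := LinearMap.ker π
  M₀ := N
  ι := (LinearMap.ker π).subtype
  π := π
  mono := Subtype.val_injective
  exact := Submodule.range_subtype _
  epi := hπ
  mem₁ := hker
  mem₀ := hN
  approx := happrox

theorem π_projection_apply (S : ApproxSeq R M X) {q c : Submodule R S.M₀} (hqc : IsCompl q c)
    (hc : c ≤ LinearMap.ker S.π) (x : S.M₀) : S.π (q.projection c hqc x) = S.π x := by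
  have := hc (Submodule.sub_projection_mem hqc x)
  rw [LinearMap.mem_ker, map_sub, sub_eq_zero] at this
  exact this.symm

noncomputable def restrict (S : ApproxSeq R M X) (q c : Submodule R S.M₀) (hqc : IsCompl q c)
    (hc : c ≤ LinearMap.ker S.π) : ApproxSeq R M X :=
  let r := q.projectionOnto c hqc
  have hr : ∀ x, S.π (r x) = S.π x := S.π_projection_apply hqc hc
  ofApprox (S.π ∘ₗ q.subtype)
    (fun y ↦ let ⟨x, hx⟩ := S.epi y; ⟨r x, (hr x).trans hx⟩)
    (S.mem₀.of_retract q.subtype r (Submodule.projectionOnto_comp_subtype hqc))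
    (S.inAdd_ker.of_retract
      ((q.subtype ∘ₗ (LinearMap.ker _).subtype).codRestrict _ fun z ↦ z.2)
      ((r ∘ₗ (LinearMap.ker S.π).subtype).codRestrict _ fun z ↦ (hr z).trans z.2)
      (by ext z; exact congrArg Subtype.val (Submodule.projectionOnto_apply_left hqc z.1)))
    (fun M' _ _ hM' f ↦ let ⟨g, hg⟩ := S.approx M' hM' f; ⟨r ∘ₗ g, by ext x; simp [hr, ← hg]⟩)

theorem exists_splitMono_of_rightMinimal (S T : ApproxSeq R M X) (hS : RightMinimal R S.π) :
    ∃ (u : S.M₁ →ₗ[R] T.M₁) (v : S.M₀ →ₗ[R] T.M₀),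
      (∃ u' : T.M₁ →ₗ[R] S.M₁, u' ∘ₗ u = LinearMap.id) ∧
      (∃ v' : T.M₀ →ₗ[R] S.M₀, v' ∘ₗ v = LinearMap.id) ∧
      v ∘ₗ S.ι = T.ι ∘ₗ u ∧ T.π ∘ₗ v = S.π := by
  obtain ⟨v, hv⟩ := T.approx S.M₀ S.mem₀ S.π
  obtain ⟨w, hw⟩ := S.approx T.M₀ T.mem₀ T.π
  obtain ⟨v', hv'v, hv'⟩ := hS.exists_retraction v w hv hw
  refine ⟨S.mapKer T v hv, v, ⟨T.mapKer S v' hv', ?_⟩, ⟨v', hv'v⟩, by ext; simp, hv⟩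
  ext y
  apply S.mono
  simpa using congr($hv'v (S.ι y))

theorem exists_rightMinimal [IsNoetherian R M] [IsArtinian R M]
    (hex : Nonempty (ApproxSeq R M X)) : ∃ S : ApproxSeq R M X, RightMinimal R S.π := by
  let len (T : ApproxSeq R M X) : ℕ∞ := Module.length R T.M₀
  let S := Function.argmin len
  refine ⟨S, fun g hg ↦ ?_⟩
  have := S.mem₀.isNoetherian
  have := S.mem₀.isArtinian
  obtain ⟨n, hfit, hn⟩ :=
    (g.eventually_isCompl_ker_pow_range_pow.and (Filter.eventually_ge_atTop 1)).exists
  have hker : LinearMap.ker (g ^ n) ≤ LinearMap.ker S.π := fun x hx ↦ by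
    rw [LinearMap.mem_ker] at hx ⊢
    rw [← congr($(LinearMap.comp_pow_eq_self hg n) x), LinearMap.comp_apply, hx, map_zero]
  have hrange : LinearMap.range (g ^ n) = ⊤ := by
    by_contra hne
    exact Function.not_lt_argmin len (S.restrict _ _ hfit.symm hker) (Submodule.length_lt hne)
  have hker_bot : LinearMap.ker (g ^ n) = ⊥ := by
    simpa [hrange] using hfit.inf_eq_bot
  have hunit : IsUnit (g ^ n) := (Module.End.isUnit_iff _).2
    ⟨LinearMap.ker_eq_bot.1 hker_bot, LinearMap.range_eq_top.1 hrange⟩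
  exact (Module.End.isUnit_iff g).1 ((isUnit_pow_iff (by omega)).1 hunit)

end ApproxSeq

theorem stmt_3_general (k A : Type) [Field k] [Ring A] [Algebra k A] [FiniteDimensional k A]
    (M X : Type)
    [AddCommGroup M] [Module Aᵐᵒᵖ M] [Module.Finite Aᵐᵒᵖ M]
    [AddCommGroup X] [Module Aᵐᵒᵖ X]
    (hex : Nonempty (ApproxSeq Aᵐᵒᵖ M X)) :
    ∃ S : ApproxSeq Aᵐᵒᵖ M X, RightMinimal Aᵐᵒᵖ S.π ∧
      ∀ T : ApproxSeq Aᵐᵒᵖ M X,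
        ∃ (u : S.M₁ →ₗ[Aᵐᵒᵖ] T.M₁) (v : S.M₀ →ₗ[Aᵐᵒᵖ] T.M₀),
          (∃ u' : T.M₁ →ₗ[Aᵐᵒᵖ] S.M₁, u' ∘ₗ u = LinearMap.id) ∧
          (∃ v' : T.M₀ →ₗ[Aᵐᵒᵖ] S.M₀, v' ∘ₗ v = LinearMap.id) ∧
          v ∘ₗ S.ι = T.ι ∘ₗ u ∧ T.π ∘ₗ v = S.π := by
  have : Module.Finite k Aᵐᵒᵖ := .equiv (MulOpposite.opLinearEquiv k)
  have : IsNoetherianRing Aᵐᵒᵖ := .of_finite k Aᵐᵒᵖ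
  have : IsArtinianRing Aᵐᵒᵖ := .of_finite k Aᵐᵒᵖ
  obtain ⟨S, hS⟩ := ApproxSeq.exists_rightMinimal hex
  exact ⟨S, hS, fun T ↦ S.exists_splitMono_of_rightMinimal T hS⟩

theorem stmt_3 (k A : Type) [Field k] [Ring A] [Algebra k A] [FiniteDimensional k A]
    (M X : Type)
    [AddCommGroup M] [Module Aᵐᵒᵖ M] [Module.Finite Aᵐᵒᵖ M]
    [AddCommGroup X] [Module Aᵐᵒᵖ X] [Module.Finite Aᵐᵒᵖ X]
    (hex : Nonempty (ApproxSeq Aᵐᵒᵖ M X)) :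
    ∃ S : ApproxSeq Aᵐᵒᵖ M X, RightMinimal Aᵐᵒᵖ S.π ∧
      ∀ T : ApproxSeq Aᵐᵒᵖ M X,
        ∃ (u : S.M₁ →ₗ[Aᵐᵒᵖ] T.M₁) (v : S.M₀ →ₗ[Aᵐᵒᵖ] T.M₀),
          (∃ u' : T.M₁ →ₗ[Aᵐᵒᵖ] S.M₁, u' ∘ₗ u = LinearMap.id) ∧
          (∃ v' : T.M₀ →ₗ[Aᵐᵒᵖ] S.M₀, v' ∘ₗ v = LinearMap.id) ∧
          v ∘ₗ S.ι = T.ι ∘ₗ u ∧ T.π ∘ₗ v = S.π :=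
  stmt_3_general k A M X hex
end

section
/- Let k be a field, A a finite-dimensional k-algebra, and I a two-sided ideal of A such that B = A/I is projective as a right A-module. Let N be a finite-dimensional right B-module, and let X be a finite-dimensional right A-module whose largest B-submodule Y = {x ∈ X : xI = 0} is nonzero. Suppose given: (1) a minimal add N-approximating sequence 0 → L → N0 → Y → 0 in mod B; and (2) a projective cover p' : P → X/Y in mod A with kernel L', such that L' = {p ∈ P : pI = 0} and L', viewed as a B-module, lies in add N. Then there exist short exact sequences of right A-modules 0 → K → N0 ⊕ P → X → 0 and 0 → L → K → L' → 0, the latter sequence splits, K is annihilated by I (hence is a B-module), and K ≅ L ⊕ L'; in particular K lies in add N. -/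
/-!
Statement 10.  Let `k` be a field, `A` a finite-dimensional `k`-algebra, and `I` a
two-sided ideal of `A` such that `B = A/I` is projective as a right `A`-module.  Let `N`
be a finite-dimensional right `B`-module (a right `A`-module annihilated by `I`), and let
`X` be a finite-dimensional right `A`-module whose largest `B`-submodule
`Y = {x ∈ X : xI = 0}` is nonzero.  Suppose given (1) a minimal `add N`-approximating
sequence `0 → L → N₀ → Y → 0` in `mod B`, and (2) a projective cover `p' : P → X/Y` in
`mod A` with kernel `L'`, such that `L' = {p ∈ P : pI = 0}` and `L'`, viewed as a
`B`-module, lies in `add N`.  Then there exist short exact sequences of right `A`-modules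
`0 → K → N₀ ⊕ P → X → 0` and `0 → L → K → L' → 0`, the latter sequence splits, `K` is
annihilated by `I` (hence is a `B`-module), and `K ≅ L ⊕ L'`; in particular `K` lies in
`add N`.

Right `A`-modules are formalized as modules over `Aᵐᵒᵖ`.
-/

/-- The largest `A/I`-submodule `{x ∈ X : xI = 0}` of a right `A`-module `X`. -/
def annSubmodule (A : Type) [Ring A] (I : TwoSidedIdeal A) (X : Type) [AddCommGroup X]
    [Module Aᵐᵒᵖ X] : Submodule Aᵐᵒᵖ X where
  carrier := {x | ∀ a ∈ I, MulOpposite.op a • x = 0}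
  add_mem' := fun hx hy a ha => by rw [smul_add, hx a ha, hy a ha, add_zero]
  zero_mem' := fun a _ => smul_zero _
  smul_mem' := fun c x hx a ha => by
    have h1 : MulOpposite.op a • c • x = MulOpposite.op (c.unop * a) • x := by
      rw [smul_smul, MulOpposite.op_mul, MulOpposite.op_unop]
    rw [h1, hx _ (I.mul_mem_left _ _ ha)]

/-- The two-sided ideal `I` viewed as a submodule of `A` as a right `A`-module. -/
def idealToRight (A : Type) [Ring A] (I : TwoSidedIdeal A) : Submodule Aᵐᵒᵖ A where
  carrier := {a | a ∈ I}
  add_mem' := fun hx hy => I.add_mem hx hy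
  zero_mem' := I.zero_mem
  smul_mem' := fun c x hx => by
    rw [MulOpposite.smul_eq_mul_unop]
    exact I.mul_mem_right _ _ hx

section Aux

variable {R : Type} [Ring R] {M X Y : Type} [AddCommGroup M] [Module R M]
  [AddCommGroup X] [Module R X] [AddCommGroup Y] [Module R Y]

lemma inAdd_of_equiv (e : X ≃ₗ[R] Y) (h : InAdd R M X) : InAdd R M Y := by
  obtain ⟨n, i, p, hip⟩ := h
  refine ⟨n, i ∘ₗ e.symm.toLinearMap, e.toLinearMap ∘ₗ p, ?_⟩
  apply LinearMap.ext; intro y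
  have h := DFunLike.congr_fun hip (e.symm y)
  simp only [LinearMap.coe_comp, Function.comp_apply, LinearMap.id_coe, id_eq] at h
  simp only [LinearMap.coe_comp, Function.comp_apply, LinearEquiv.coe_coe,
    LinearMap.id_coe, id_eq]
  rw [h, e.apply_symm_apply]

lemma inAdd_prod (hX : InAdd R M X) (hY : InAdd R M Y) : InAdd R M (X × Y) := by
  obtain ⟨m, i₁, p₁, h₁⟩ := hX
  obtain ⟨n, i₂, p₂, h₂⟩ := hY
  let e : (Fin (m + n) → M) ≃ₗ[R] (Fin m → M) × (Fin n → M) :=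
    (LinearEquiv.funCongrLeft R M finSumFinEquiv).trans
      (LinearEquiv.sumArrowLequivProdArrow _ _ R M)
  refine ⟨m + n, e.symm.toLinearMap ∘ₗ (i₁.prodMap i₂),
    (p₁.prodMap p₂) ∘ₗ e.toLinearMap, ?_⟩
  apply LinearMap.ext; intro x
  have hx1 := DFunLike.congr_fun h₁ x.1
  have hx2 := DFunLike.congr_fun h₂ x.2
  simp only [LinearMap.coe_comp, Function.comp_apply, LinearMap.id_coe, id_eq] at hx1 hx2
  simp only [LinearMap.coe_comp, Function.comp_apply, LinearEquiv.coe_coe,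
    LinearEquiv.apply_symm_apply, LinearMap.prodMap_apply, LinearMap.id_coe, id_eq]
  rw [hx1, hx2]

lemma inAdd_smul_eq_zero (h : InAdd R M X) {r : R} (hr : ∀ m : M, r • m = 0)
    (x : X) : r • x = 0 := by
  obtain ⟨n, i, p, hip⟩ := h
  have hx : p (i x) = x := DFunLike.congr_fun hip x
  have : r • i x = 0 := funext fun j => hr (i x j)
  rw [← hx, ← map_smul, this, map_zero]

end Aux

theorem stmt_10 (k A : Type) [Field k] [Ring A] [Algebra k A] [FiniteDimensional k A]
    (I : TwoSidedIdeal A)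
    (hB : Module.Projective Aᵐᵒᵖ (A ⧸ idealToRight A I))
    -- `N` : a finite-dimensional right `B`-module
    (N : Type) [AddCommGroup N] [Module Aᵐᵒᵖ N] [Module.Finite Aᵐᵒᵖ N]
    (hN : ∀ n : N, ∀ a ∈ I, MulOpposite.op a • n = 0)
    -- `X` : a finite-dimensional right `A`-module with nonzero largest `B`-submodule `Y`
    (X : Type) [AddCommGroup X] [Module Aᵐᵒᵖ X] [Module.Finite Aᵐᵒᵖ X]
    (hY : annSubmodule A I X ≠ ⊥)
    -- (1) a minimal `add N`-approximating sequence `0 → L → N₀ → Y → 0` in `mod B`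
    (L N₀ : Type) [AddCommGroup L] [Module Aᵐᵒᵖ L] [AddCommGroup N₀] [Module Aᵐᵒᵖ N₀]
    (hL : InAdd Aᵐᵒᵖ N L) (hN₀ : InAdd Aᵐᵒᵖ N N₀)
    (r : L →ₗ[Aᵐᵒᵖ] N₀) (q : N₀ →ₗ[Aᵐᵒᵖ] ↥(annSubmodule A I X))
    (hr : Function.Injective r) (hq : Function.Surjective q)
    (hrq : LinearMap.range r = LinearMap.ker q)
    (happrox : IsAddApprox Aᵐᵒᵖ N q) (hmin : RightMinimal Aᵐᵒᵖ q)
    -- (2) a projective cover `p' : P → X/Y` with kernel `L' = {p ∈ P : pI = 0} ∈ add N`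
    (P : Type) [AddCommGroup P] [Module Aᵐᵒᵖ P] (hP : Module.Projective Aᵐᵒᵖ P)
    (p' : P →ₗ[Aᵐᵒᵖ] (X ⧸ annSubmodule A I X))
    (hp' : Function.Surjective p') (hp'min : RightMinimal Aᵐᵒᵖ p')
    (hker : LinearMap.ker p' = annSubmodule A I P)
    (hL' : InAdd Aᵐᵒᵖ N ↥(LinearMap.ker p')) :
    ∃ (K : Type) (_ : AddCommGroup K) (_ : Module Aᵐᵒᵖ K)
      (s : K →ₗ[Aᵐᵒᵖ] N₀ × P) (t : N₀ × P →ₗ[Aᵐᵒᵖ] X)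
      (l : L →ₗ[Aᵐᵒᵖ] K) (l' : K →ₗ[Aᵐᵒᵖ] ↥(LinearMap.ker p')),
      -- `0 → K → N₀ ⊕ P → X → 0` is exact
      Function.Injective s ∧ LinearMap.range s = LinearMap.ker t ∧ Function.Surjective t ∧
      -- `0 → L → K → L' → 0` is exact
      Function.Injective l ∧ LinearMap.range l = LinearMap.ker l' ∧ Function.Surjective l' ∧
      -- the latter sequence splits
      (∃ ρ : K →ₗ[Aᵐᵒᵖ] L, ρ ∘ₗ l = LinearMap.id) ∧
      -- `K` is annihilated by `I`, hence is a `B`-module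
      (∀ x : K, ∀ a ∈ I, MulOpposite.op a • x = 0) ∧
      -- `K ≅ L ⊕ L'`
      Nonempty (K ≃ₗ[Aᵐᵒᵖ] L × ↥(LinearMap.ker p')) ∧
      -- in particular `K` lies in `add N`
      InAdd Aᵐᵒᵖ N K := by
  classical
  obtain ⟨σ, hσ⟩ := Module.projective_lifting_property (annSubmodule A I X).mkQ p'
    (annSubmodule A I X).mkQ_surjective
  have hσ' : ∀ p : P, (annSubmodule A I X).mkQ (σ p) = p' p := fun p => DFunLike.congr_fun hσ p
  -- the map `t : N₀ × P → X`
  set t : N₀ × P →ₗ[Aᵐᵒᵖ] X := ((annSubmodule A I X).subtype ∘ₗ q).coprod σ with htdef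
  have ht_apply : ∀ z : N₀ × P, t z = (q z.1 : X) + σ z.2 := fun z => rfl
  have htsurj : Function.Surjective t := by
    intro x
    obtain ⟨p, hp⟩ := hp' ((annSubmodule A I X).mkQ x)
    have hmem : x - σ p ∈ annSubmodule A I X := by
      rw [← Submodule.Quotient.mk_eq_zero (annSubmodule A I X), ← Submodule.mkQ_apply,
        map_sub, hσ' p, hp, sub_self]
    obtain ⟨n, hn⟩ := hq ⟨x - σ p, hmem⟩
    refine ⟨(n, p), ?_⟩
    have h2 : (q n : X) = x - σ p := by rw [hn]
    rw [ht_apply, h2, sub_add_cancel]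
  -- key fact: second components of elements of `ker t` lie in `ker p'`
  have hkey : ∀ z : N₀ × P, z ∈ LinearMap.ker t → z.2 ∈ LinearMap.ker p' := by
    intro z hz
    rw [LinearMap.mem_ker] at hz ⊢
    rw [ht_apply] at hz
    have h1 : σ z.2 = -(q z.1 : X) := eq_neg_of_add_eq_zero_right hz
    have h2 : ((q z.1 : X) : X) ∈ annSubmodule A I X := (q z.1).2
    rw [← hσ' z.2, h1, map_neg, neg_eq_zero, Submodule.mkQ_apply,
      Submodule.Quotient.mk_eq_zero]
    exact h2
  -- the map `l : L → K = ker t`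
  have hlmem : ∀ x : L, ((LinearMap.inl Aᵐᵒᵖ N₀ P) ∘ₗ r) x ∈ LinearMap.ker t := by
    intro x
    rw [LinearMap.mem_ker]
    have hrx : r x ∈ LinearMap.ker q := by
      rw [← hrq]; exact LinearMap.mem_range_self r x
    rw [LinearMap.mem_ker] at hrx
    show t (r x, 0) = 0
    rw [ht_apply]
    simp [hrx]
  set l : L →ₗ[Aᵐᵒᵖ] ↥(LinearMap.ker t) :=
    LinearMap.codRestrict (LinearMap.ker t) ((LinearMap.inl Aᵐᵒᵖ N₀ P) ∘ₗ r) hlmem with hldef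
  have hl_apply : ∀ x : L, (l x : N₀ × P) = (r x, 0) := fun x => rfl
  have hlinj : Function.Injective l := by
    intro a b hab
    apply hr
    have := congrArg (fun z : ↥(LinearMap.ker t) => (z : N₀ × P).1) hab
    simpa [hl_apply] using this
  -- the map `l' : K → ker p'`
  set l' : ↥(LinearMap.ker t) →ₗ[Aᵐᵒᵖ] ↥(LinearMap.ker p') :=
    LinearMap.codRestrict (LinearMap.ker p')
      (LinearMap.snd Aᵐᵒᵖ N₀ P ∘ₗ (LinearMap.ker t).subtype)
      (fun z => hkey z.1 z.2) with hl'def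
  have hl'_apply : ∀ z : ↥(LinearMap.ker t), (l' z : P) = (z : N₀ × P).2 := fun z => rfl
  -- exactness of `0 → L → K → L'`
  have hrange : LinearMap.range l = LinearMap.ker l' := by
    ext z
    constructor
    · rintro ⟨a, rfl⟩
      rw [LinearMap.mem_ker]
      apply Subtype.ext
      rw [hl'_apply, hl_apply]
      rfl
    · intro hz
      rw [LinearMap.mem_ker] at hz
      have h2 : (z : N₀ × P).2 = 0 := by rw [← hl'_apply, hz]; rfl
      have hzt : t (z : N₀ × P) = 0 := z.2
      rw [ht_apply, h2, map_zero, add_zero] at hzt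
      have hq0 : q (z : N₀ × P).1 = 0 := Subtype.ext hzt
      have : (z : N₀ × P).1 ∈ LinearMap.range r := by
        rw [hrq, LinearMap.mem_ker]; exact hq0
      obtain ⟨a, ha⟩ := this
      refine ⟨a, ?_⟩
      apply Subtype.ext
      rw [hl_apply]
      exact Prod.ext ha h2.symm
  -- the splitting map `u : ker p' → K`
  have hφmem : ∀ p : ↥(LinearMap.ker p'),
      (-(σ ∘ₗ (LinearMap.ker p').subtype)) p ∈ annSubmodule A I X := by
    intro p
    have h1 : (annSubmodule A I X).mkQ (σ (p : P)) = 0 := by rw [hσ' (p : P)]; exact p.2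
    rw [Submodule.mkQ_apply, Submodule.Quotient.mk_eq_zero] at h1
    exact neg_mem h1
  set φ : ↥(LinearMap.ker p') →ₗ[Aᵐᵒᵖ] ↥(annSubmodule A I X) :=
    LinearMap.codRestrict (annSubmodule A I X) (-(σ ∘ₗ (LinearMap.ker p').subtype)) hφmem
    with hφdef
  have hφ_apply : ∀ p : ↥(LinearMap.ker p'), (φ p : X) = -σ (p : P) := fun p => rfl
  obtain ⟨g, hg⟩ := happrox ↥(LinearMap.ker p') hL' φ
  have hg' : ∀ p : ↥(LinearMap.ker p'), q (g p) = φ p := fun p => DFunLike.congr_fun hg p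
  have humem : ∀ p : ↥(LinearMap.ker p'),
      (g.prod (LinearMap.ker p').subtype) p ∈ LinearMap.ker t := by
    intro p
    rw [LinearMap.mem_ker]
    show t (g p, (p : P)) = 0
    rw [ht_apply]
    show (q (g p) : X) + σ (p : P) = 0
    rw [hg' p, hφ_apply, neg_add_cancel]
  set u : ↥(LinearMap.ker p') →ₗ[Aᵐᵒᵖ] ↥(LinearMap.ker t) :=
    LinearMap.codRestrict (LinearMap.ker t) (g.prod (LinearMap.ker p').subtype) humem
    with hudef
  have hu_apply : ∀ p : ↥(LinearMap.ker p'), (u p : N₀ × P) = (g p, (p : P)) := fun p => rfl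
  have hl'u : ∀ b : ↥(LinearMap.ker p'), l' (u b) = b := by
    intro b
    apply Subtype.ext
    rw [hl'_apply, hu_apply]
  have hl'surj : Function.Surjective l' := fun b => ⟨u b, hl'u b⟩
  -- the retraction `ρ : K → L`
  set ν : ↥(LinearMap.ker t) →ₗ[Aᵐᵒᵖ] ↥(LinearMap.ker t) := LinearMap.id - u ∘ₗ l' with hνdef
  have hν_apply : ∀ x, ν x = x - u (l' x) := fun x => rfl
  have hν_range : ∀ x : ↥(LinearMap.ker t), ν x ∈ LinearMap.range l := by
    intro x
    rw [hrange, LinearMap.mem_ker, hν_apply, map_sub, hl'u, sub_self]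
  set eL := LinearEquiv.ofInjective l hlinj with heLdef
  set ρ : ↥(LinearMap.ker t) →ₗ[Aᵐᵒᵖ] L :=
    eL.symm.toLinearMap ∘ₗ LinearMap.codRestrict (LinearMap.range l) ν hν_range with hρdef
  have hlρ : ∀ x, l (ρ x) = ν x := by
    intro x
    have h1 : l (eL.symm ⟨ν x, hν_range x⟩) =
        ((eL (eL.symm ⟨ν x, hν_range x⟩)) : ↥(LinearMap.ker t)) := by
      rw [LinearEquiv.ofInjective_apply]
    rw [show ρ x = eL.symm ⟨ν x, hν_range x⟩ from rfl, h1, eL.apply_symm_apply]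
  have hl'l : ∀ a : L, l' (l a) = 0 := by
    intro a
    have : l a ∈ LinearMap.ker l' := hrange ▸ LinearMap.mem_range_self l a
    rwa [LinearMap.mem_ker] at this
  have hρl : ∀ a : L, ρ (l a) = a := by
    intro a
    apply hlinj
    rw [hlρ, hν_apply, hl'l, map_zero, sub_zero]
  -- `K ≅ L × L'`
  have h1 : (ρ.prod l') ∘ₗ (l.coprod u) = LinearMap.id := by
    apply LinearMap.ext; intro z
    have hc : (l.coprod u) z = l z.1 + u z.2 := rfl
    have h2 : l' ((l.coprod u) z) = z.2 := by
      rw [hc, map_add, hl'l, zero_add, hl'u]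
    have h3 : ρ ((l.coprod u) z) = z.1 := by
      apply hlinj
      rw [hlρ, hν_apply, h2, hc, add_sub_cancel_right]
    show (ρ.prod l') ((l.coprod u) z) = z
    rw [LinearMap.prod_apply]
    exact Prod.ext h3 h2
  have h2 : (l.coprod u) ∘ₗ (ρ.prod l') = LinearMap.id := by
    apply LinearMap.ext; intro x
    show (l.coprod u) ((ρ.prod l') x) = x
    rw [LinearMap.prod_apply]
    show l (ρ x) + u (l' x) = x
    rw [hlρ, hν_apply, sub_add_cancel]
  set e : ↥(LinearMap.ker t) ≃ₗ[Aᵐᵒᵖ] L × ↥(LinearMap.ker p') :=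
    LinearEquiv.ofLinear (ρ.prod l') (l.coprod u) h1 h2 with hedef
  -- `K` is annihilated by `I`
  have hKann : ∀ x : ↥(LinearMap.ker t), ∀ a ∈ I, MulOpposite.op a • x = 0 := by
    intro x a ha
    apply Subtype.ext
    have hn₀ : MulOpposite.op a • (x : N₀ × P).1 = 0 :=
      inAdd_smul_eq_zero hN₀ (fun m => hN m a ha) _
    have hp2 : (x : N₀ × P).2 ∈ annSubmodule A I P := by
      rw [← hker]; exact hkey x.1 x.2
    have hp0 : MulOpposite.op a • (x : N₀ × P).2 = 0 := hp2 a ha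
    show MulOpposite.op a • (x : N₀ × P) = 0
    rw [Prod.smul_def, hn₀, hp0]
    rfl
  refine ⟨↥(LinearMap.ker t), inferInstance, inferInstance, (LinearMap.ker t).subtype, t,
    l, l', (LinearMap.ker t).injective_subtype, (LinearMap.ker t).range_subtype, htsurj,
    hlinj, hrange, hl'surj, ⟨ρ, LinearMap.ext hρl⟩, hKann, ⟨e⟩,
    inAdd_of_equiv e.symm (inAdd_prod hL hL')⟩
end
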